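/- arXiv:2512.21463 — 2 statements merged into one kernel-verified Lean document; each statement's English description precedes it below -/
import Mathlib

section
/- Fix real numbers l and d with d > 0. Let z = tanh l + i·sech l and w = e^d·z be points of the upper half-plane. Then cosh(dist(z, w)) = 1 + 2·sinh²(d/2)·cosh² l; equivalently cosh²(dist(z,w)/2) = cosh²(d/2) + sinh² l · sinh²(d/2). In particular, the distance is minimized exactly at l = 0, where it equals d. -/
/-! The dilation `z ↦ e^d z` moves a point `z` of `ℍ` by a hyperbolic distance that depends
only on `‖z‖ / Im z`: `cosh dist = 1 + 2 sinh² (d/2) (‖z‖ / Im z)²`. At `z = tanh l + i sech l`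
on the unit circle this ratio is `cosh l`, which is at least `1`, with equality only at `l = 0`;
since `cosh d = 1 + 2 sinh² (d/2)` and `cosh` is injective on `[0, ∞)`, this gives the
comparison with `d`. -/

open Real Complex

namespace Real

theorem cosh_eq_one_add_two_mul_sinh_half_sq (x : ℝ) : cosh x = 1 + 2 * sinh (x / 2) ^ 2 := by
  have h := cosh_two_mul (x / 2)
  rw [mul_div_cancel₀ x two_ne_zero] at h
  rw [h, cosh_sq']
  ring

theorem cosh_half_sq (x : ℝ) : cosh (x / 2) ^ 2 = (1 + cosh x) / 2 := by
  rw [cosh_eq_one_add_two_mul_sinh_half_sq x, cosh_sq']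
  ring

theorem sq_exp_sub_one_eq_four_mul_exp_mul_sinh_half_sq (x : ℝ) :
    (exp x - 1) ^ 2 = 4 * exp x * sinh (x / 2) ^ 2 := by
  have hx : exp x = exp (x / 2) ^ 2 := by rw [← exp_nat_mul]; ring_nf
  rw [sinh_eq, exp_neg, hx]
  field_simp
  ring

end Real

namespace UpperHalfPlane

theorem cosh_dist_of_coe_eq_exp_mul {z w : ℍ} (d : ℝ) (hw : (w : ℂ) = Real.exp d * z) :
    Real.cosh (dist z w) = 1 + 2 * Real.sinh (d / 2) ^ 2 * (‖(z : ℂ)‖ / z.im) ^ 2 := by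
  have hwim : w.im = Real.exp d * z.im := by
    rw [← coe_im, hw, im_ofReal_mul, coe_im]
  have hdist : dist (z : ℂ) w ^ 2 = (Real.exp d - 1) ^ 2 * ‖(z : ℂ)‖ ^ 2 := by
    rw [Complex.dist_eq, hw, ← one_sub_mul, norm_mul, mul_pow, ← ofReal_one, ← ofReal_sub,
      norm_real, Real.norm_eq_abs, sq_abs, ← neg_sub, neg_sq]
  rw [cosh_dist, hdist, hwim, Real.sq_exp_sub_one_eq_four_mul_exp_mul_sinh_half_sq]
  have := z.im_pos.ne'
  field_simp
  ring

end UpperHalfPlane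

theorem norm_tanh_add_inv_cosh_mul_I (l : ℝ) :
    ‖(Real.tanh l : ℂ) + (Real.cosh l)⁻¹ * Complex.I‖ = 1 := by
  have hc := (Real.cosh_pos l).ne'
  rw [norm_add_mul_I, Real.tanh_eq_sinh_div_cosh, ← Real.sqrt_one]
  congr 1
  field_simp
  rw [Real.cosh_sq]

theorem stmt_13 (l d : ℝ) (hd : 0 < d) (z w : UpperHalfPlane)
    (hz : (z : ℂ) = Real.tanh l + (Real.cosh l)⁻¹ * Complex.I)
    (hw : (w : ℂ) = Real.exp d * (z : ℂ)) :
    Real.cosh (dist z w) = 1 + 2 * Real.sinh (d/2) ^ 2 * Real.cosh l ^ 2 ∧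
    Real.cosh (dist z w / 2) ^ 2 =
      Real.cosh (d/2) ^ 2 + Real.sinh l ^ 2 * Real.sinh (d/2) ^ 2 ∧
    d ≤ dist z w ∧ (dist z w = d ↔ l = 0) := by
  have hzim : z.im = (Real.cosh l)⁻¹ := by
    rw [← UpperHalfPlane.coe_im, hz, add_im, ofReal_im, im_ofReal_mul, I_im]
    ring
  have hcosh : Real.cosh (dist z w) = 1 + 2 * Real.sinh (d/2) ^ 2 * Real.cosh l ^ 2 := by
    rw [UpperHalfPlane.cosh_dist_of_coe_eq_exp_mul d hw, hz, norm_tanh_add_inv_cosh_mul_I,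
      hzim, one_div, inv_inv]
  have hexcess :
      Real.cosh (dist z w) - Real.cosh d = 2 * Real.sinh (d/2) ^ 2 * Real.sinh l ^ 2 := by
    rw [hcosh, Real.cosh_eq_one_add_two_mul_sinh_half_sq d, Real.cosh_sq]
    ring
  have hdist : 0 ≤ dist z w := dist_nonneg
  refine ⟨hcosh, ?_, ?_, ?_⟩
  · rw [Real.cosh_half_sq, hcosh, Real.cosh_sq' (d/2), Real.cosh_sq l]
    ring
  · rw [← abs_of_pos hd, ← abs_of_nonneg hdist, ← Real.cosh_le_cosh]
    linarith [hexcess, (by positivity : 0 ≤ 2 * Real.sinh (d/2) ^ 2 * Real.sinh l ^ 2)]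
  · have hsinh : Real.sinh (d/2) ≠ 0 := (Real.sinh_pos_iff.mpr (half_pos hd)).ne'
    rw [← Real.cosh_injOn.eq_iff (Set.mem_Ici.mpr hdist) (Set.mem_Ici.mpr hd.le), ← sub_eq_zero,
      hexcess]
    simp [hsinh]
end

section
/- Let r = 5^(1/4) − √(√5 − 1). Then 0 < r < 1 and cosh(4·artanh r) = (3 + √5)/2; equivalently 2·((1 + r²)/(1 − r²))² − 1 = (3 + √5)/2. -/
/-!
Put `q = 5^{1/4}` and `p = √(√5 - 1)`, so that `q² - p² = 1` and `r = q - p = 1 / (q + p)`.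
From `q² - p² = 1` one gets `1 + r² = 2q(q - p)` and `1 - r² = 2p(q - p)`, hence
`cosh (2 artanh r) = (1 + r²)/(1 - r²) = q/p`, and the double-angle formula gives
`cosh (4 artanh r) = 2q²/p² - 1 = (√5 + 1)/(√5 - 1) = (3 + √5)/2`.
-/

open Real

/-- Inverse hyperbolic tangent: `artanh x = (1/2) log ((1+x)/(1−x))` for `|x| < 1`. -/
noncomputable def artanh (x : ℝ) : ℝ := Real.log ((1 + x) / (1 - x)) / 2

theorem cosh_two_mul_artanh {x : ℝ} (hx₀ : -1 < x) (hx₁ : x < 1) :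
    cosh (2 * _root_.artanh x) = (1 + x ^ 2) / (1 - x ^ 2) := by
  have hnum : 0 < 1 + x := by linarith
  have hden : 0 < 1 - x := by linarith
  rw [_root_.artanh, mul_div_cancel₀ _ two_ne_zero, cosh_log (div_pos hnum hden)]
  field_simp [(by nlinarith : 1 - x ^ 2 ≠ 0)]
  ring

theorem cosh_four_mul_artanh {x : ℝ} (hx₀ : -1 < x) (hx₁ : x < 1) :
    cosh (4 * _root_.artanh x) = 2 * ((1 + x ^ 2) / (1 - x ^ 2)) ^ 2 - 1 := by
  rw [show (4 : ℝ) * _root_.artanh x = 2 * (2 * _root_.artanh x) by ring, cosh_two_mul,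
    sinh_sq, cosh_two_mul_artanh hx₀ hx₁]
  ring

section HyperbolicPair

variable {q p : ℝ} (hq : 0 < q) (hp : 0 < p) (hqp : q ^ 2 - p ^ 2 = 1)
include hq hp hqp

theorem sub_pos_of_sq_sub_sq_eq_one : 0 < q - p := by
  nlinarith

theorem sub_lt_one_of_sq_sub_sq_eq_one : q - p < 1 := by
  nlinarith [sub_pos_of_sq_sub_sq_eq_one hq hp hqp]

theorem one_add_sq_div_one_sub_sq_of_sq_sub_sq_eq_one :
    (1 + (q - p) ^ 2) / (1 - (q - p) ^ 2) = q / p := by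
  have hd := sub_pos_of_sq_sub_sq_eq_one hq hp hqp
  have hnum : 1 + (q - p) ^ 2 = 2 * q * (q - p) := by linear_combination (-1) * hqp
  have hden : 1 - (q - p) ^ 2 = 2 * p * (q - p) := by linear_combination (-1) * hqp
  rw [hnum, hden]
  field_simp

end HyperbolicPair

theorem rpow_one_div_four_sq_eq_sqrt {a : ℝ} (ha : 0 ≤ a) :
    (a ^ ((1 : ℝ) / 4)) ^ 2 = √a := by
  rw [← rpow_natCast, ← rpow_mul ha, sqrt_eq_rpow]
  norm_num

theorem stmt_16 (r : ℝ) (hr : r = (5 : ℝ) ^ ((1:ℝ)/4) - Real.sqrt (Real.sqrt 5 - 1)) :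
    0 < r ∧ r < 1 ∧
    Real.cosh (4 * _root_.artanh r) = (3 + Real.sqrt 5) / 2 ∧
    2 * ((1 + r^2) / (1 - r^2)) ^ 2 - 1 = (3 + Real.sqrt 5) / 2 := by
  set q := (5 : ℝ) ^ ((1 : ℝ) / 4)
  set p := √(√5 - 1)
  have hs : √5 ^ 2 = 5 := sq_sqrt (by norm_num)
  have hs₁ : 1 < √5 := by rw [lt_sqrt zero_le_one]; norm_num
  have hq₂ : q ^ 2 = √5 := rpow_one_div_four_sq_eq_sqrt (by norm_num)
  have hp₂ : p ^ 2 = √5 - 1 := sq_sqrt (by linarith)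
  have hq : 0 < q := by positivity
  have hp : 0 < p := sqrt_pos.2 (by linarith)
  have hqp : q ^ 2 - p ^ 2 = 1 := by rw [hq₂, hp₂]; ring
  have hr₀ : 0 < r := hr ▸ sub_pos_of_sq_sub_sq_eq_one hq hp hqp
  have hr₁ : r < 1 := hr ▸ sub_lt_one_of_sq_sub_sq_eq_one hq hp hqp
  have key : 2 * ((1 + r ^ 2) / (1 - r ^ 2)) ^ 2 - 1 = (3 + √5) / 2 := by
    rw [hr, one_add_sq_div_one_sub_sq_of_sq_sub_sq_eq_one hq hp hqp, div_pow, hq₂, hp₂]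
    field_simp [(by linarith : √5 - 1 ≠ 0)]
    linear_combination (-1) * hs
  exact ⟨hr₀, hr₁, by rw [cosh_four_mul_artanh (by linarith) hr₁, key], key⟩
end
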